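/- For each basis element x ∈ B, the endomorphism D_x of L(V), defined on a monomial α = α₁⊗⋯⊗α_l by D_x(α) = Σ_{i=1}^{l} δ_{α_i,x} · (class of D_{i,i}(α)) and extended linearly, is a derivation of the Lie algebra L(V): D_x([α, β]) = [D_x(α), β] + [α, D_x(β)] for all α, β ∈ L(V). -/

import Mathlib

/-!
Statement 0: the bracket
`[α, β] = Σᵢ Σⱼ ⟨αᵢ, βⱼ⟩ • class (D_{i,i}(α) ⊗ D_{j,j}(β))`
on basis monomials descends to a well-defined bilinear map on cyclic
coinvariants, and the resulting bracket on `L(V) = ⊕_{l≥2} (V^⊗l)_{ℤ/l}`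
does not depend on the choice of basis.
-/

open scoped TensorProduct DirectSum

noncomputable section

variable (K : Type*) [Field K] (V : Type*) [AddCommGroup V] [Module K V]

/-- The `l`-th tensor power of `V`. -/
abbrev TP (l : ℕ) : Type _ := ⨂[K] (_ : Fin l), V

/-- The cyclic shift `σ` (generator of `ℤ/lℤ`) on the `l`-th tensor power:
it permutes the tensor factors cyclically. -/
def cyc (l : ℕ) : TP K V l ≃ₗ[K] TP K V l :=
  PiTensorProduct.reindex K (fun _ : Fin l => V) (finRotate l)

/-- The submodule of `V^⊗l` spanned by all `σ(t) - t`; quotienting by it gives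
the cyclic coinvariants. -/
def cycRel (l : ℕ) : Submodule K (TP K V l) :=
  Submodule.span K {z | ∃ t : TP K V l, z = cyc K V l t - t}

/-- The space `(V^{⊗l})_{ℤ/lℤ}` of cyclic coinvariants. -/
abbrev Coinv (l : ℕ) : Type _ := TP K V l ⧸ cycRel K V l

/-- The class of a tensor in the coinvariants. -/
def cls {l : ℕ} (t : TP K V l) : Coinv K V l := Submodule.Quotient.mk t

/-- The pure tensor (monomial) `v 0 ⊗ ⋯ ⊗ v (l-1)`. -/
def mono {l : ℕ} (v : Fin l → V) : TP K V l := PiTensorProduct.tprod K v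

/-- The direct sum `⊕_{l ≥ 0} (V^{⊗l})_{ℤ/lℤ}` of all the cyclic coinvariant
spaces; `L(V) = ⊕_{l ≥ 2} (V^{⊗l})_{ℤ/lℤ}` sits inside it as the part supported
in degrees `≥ 2`.  (We need degree `l - 1` around since `D_x` lowers tensor
degree by one.) -/
abbrev LB : Type _ := ⨁ l : ℕ, Coinv K V l

/-- Inclusion of the degree-`l` component. -/
def ofB (l : ℕ) : Coinv K V l →ₗ[K] LB K V :=
  DirectSum.lof K ℕ (fun l => Coinv K V l) l

/-- `L(V) = ⊕_{l ≥ 2} (V^{⊗l})_{ℤ/lℤ}`, as the subspace of `LB` supported in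
degrees `≥ 2`. -/
def LVsub : Submodule K (LB K V) :=
  ⨆ l : ℕ, LinearMap.range (ofB K V (l + 2))

/-- The word `D_{i,i}(w) = w_{i+1} ⋯ w_{i-1}` (cyclically, omitting the letter
`w_i`). -/
def dw {ι : Type*} {n : ℕ} (w : Fin (n + 1) → ι) (i : Fin (n + 1)) : Fin n → ι :=
  fun k => w (i + k.succ)

/-- `IsBracket K V B b Br` says that the bilinear map `Br` is given, on classes
of monomials (of length `≥ 1`) in the basis `b`, by the formula
`[α, β] = Σᵢ Σⱼ B(αᵢ, βⱼ) • class (D_{i,i}(α) ⊗ D_{j,j}(β))`. -/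
def IsBracket {ι : Type*} (B : V →ₗ[K] V →ₗ[K] K) (b : Module.Basis ι K V)
    (Br : LB K V →ₗ[K] LB K V →ₗ[K] LB K V) : Prop :=
  ∀ (l m : ℕ) (w : Fin (l + 1) → ι) (u : Fin (m + 1) → ι),
    Br (ofB K V (l + 1) (cls K V (mono K V fun k => b (w k))))
       (ofB K V (m + 1) (cls K V (mono K V fun k => b (u k)))) =
    ofB K V (l + m) (∑ i : Fin (l + 1), ∑ j : Fin (m + 1),
      B (b (w i)) (b (u j)) •
        cls K V (mono K V fun k : Fin (l + m) =>
          b (Fin.append (dw w i) (dw u j) k)))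

/-- `IsDx K V b x Dx` says that the linear map `Dx` is given, on classes of
monomials (of length `≥ 1`) in the basis `b`, by
`D_x(α) = Σᵢ δ_{αᵢ, x} • class (D_{i,i}(α))`. -/
def IsDx {ι : Type*} [DecidableEq ι] (b : Module.Basis ι K V) (x : ι)
    (Dx : LB K V →ₗ[K] LB K V) : Prop :=
  ∀ (l : ℕ) (w : Fin (l + 1) → ι),
    Dx (ofB K V (l + 1) (cls K V (mono K V fun k => b (w k)))) =
    ofB K V l (∑ i : Fin (l + 1),
      (if w i = x then (1 : K) else 0) • cls K V (mono K V fun k => b (dw w i k)))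

section Aux
variable {K : Type*} [Field K] {V : Type*} [AddCommGroup V] [Module K V]

lemma cls_cyc {l : ℕ} (t : TP K V l) : cls K V (cyc K V l t) = cls K V t := by
  rw [cls, cls, Submodule.Quotient.eq]
  exact Submodule.subset_span ⟨t, rfl⟩

lemma cls_rot_one {n : ℕ} (v : Fin (n+1) → V) :
    cls K V (mono K V fun k => v (k + 1)) = cls K V (mono K V v) := by
  have h := cls_cyc (K := K) (V := V) (mono K V fun k => v (k + 1))
  rw [cyc, mono, PiTensorProduct.reindex_tprod] at h
  have e : (fun i => v ((finRotate (n+1)).symm i + 1)) = v := by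
    funext k
    rw [← finRotate_succ_apply, Equiv.apply_symm_apply]
  rw [mono, mono]
  rw [e] at h
  exact h.symm

lemma cls_rot_one' {n : ℕ} (v : Fin n → V) :
    cls K V (mono K V fun k => v ⟨((k : ℕ) + 1) % n, Nat.mod_lt _ k.pos⟩) =
      cls K V (mono K V v) := by
  cases n with
  | zero => exact congrArg (cls K V) (congrArg (mono K V) (funext fun k => k.elim0))
  | succ n =>
    have e : (fun k : Fin (n+1) => v ⟨((k : ℕ) + 1) % (n+1), Nat.mod_lt _ k.pos⟩) =
        (fun k : Fin (n+1) => v (k + 1)) := by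
      funext k
      congr 1
      apply Fin.ext
      simp [Fin.val_add_one_of_lt, Fin.add_def]
    rw [e, cls_rot_one]

lemma cls_rot_nat {n : ℕ} (v : Fin n → V) (r : ℕ) :
    cls K V (mono K V fun k : Fin n => v ⟨((k : ℕ) + r) % n, Nat.mod_lt _ k.pos⟩) =
      cls K V (mono K V v) := by
  induction r with
  | zero =>
    refine Eq.trans (congrArg (cls K V) (congrArg (mono K V) (funext fun k => ?_))) rfl
    congr 1
    exact Fin.ext (by simp [Nat.mod_eq_of_lt k.isLt])
  | succ r ih =>
    have e : (fun k : Fin n => v ⟨((k : ℕ) + (r+1)) % n, Nat.mod_lt _ k.pos⟩) =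
        (fun k : Fin n => (fun k' : Fin n => v ⟨((k' : ℕ) + r) % n, Nat.mod_lt _ k'.pos⟩)
          ⟨((k : ℕ) + 1) % n, Nat.mod_lt _ k.pos⟩) := by
      funext k
      simp only []
      congr 1
      apply Fin.ext
      simp only [Nat.mod_add_mod]
      congr 1
      omega
    rw [e, cls_rot_one' (fun k' : Fin n => v ⟨((k' : ℕ) + r) % n, Nat.mod_lt _ k'.pos⟩), ih]

lemma ofB_reindex {n n' : ℕ} (h : n' = n) (f : Fin n → V) :
    ofB K V n (cls K V (mono K V f)) =
      ofB K V n' (cls K V (mono K V (fun t => f (Fin.cast h t)))) := by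
  subst h; rfl

end Aux

section Fin
lemma mod_shift (n a b : ℕ) (h : a = b ∨ a = b + n ∨ b = a + n) : a % n = b % n := by
  rcases h with rfl | rfl | rfl
  · rfl
  · rw [Nat.add_mod_right]
  · rw [Nat.add_mod_right]

lemma add_succ_rev_succ {n : ℕ} (i : Fin (n+1+1)) (k : Fin (n+1)) :
    (i + k.succ) + k.rev.succ = i := by
  apply Fin.ext
  simp only [Fin.add_def, Fin.val_succ, Fin.val_rev]
  rw [Nat.mod_add_mod]
  have hk : (k : ℕ) ≤ n := by omega
  have : (i : ℕ) + ((k : ℕ) + 1) + (n + 1 - ((k : ℕ) + 1) + 1) = (i : ℕ) + (n + 2) := by omega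
  rw [this, Nat.add_mod_right, Nat.mod_eq_of_lt i.isLt]

lemma sum_change {M : Type*} [AddCommMonoid M] {n : ℕ} (f : Fin (n+1+1) → Fin (n+1) → M) :
    ∑ i : Fin (n+1+1), ∑ k : Fin (n+1), f i k =
      ∑ i : Fin (n+1+1), ∑ k : Fin (n+1), f (i + k.succ) k.rev := by
  have σinv : ∀ z : Fin (n+1+1) × Fin (n+1),
      ((z.1 + z.2.succ) + z.2.rev.succ, z.2.rev.rev) = z := by
    rintro ⟨a, c⟩
    simp [add_succ_rev_succ]
  let e : Fin (n+1+1) × Fin (n+1) ≃ Fin (n+1+1) × Fin (n+1) :=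
    { toFun := fun z => (z.1 + z.2.succ, z.2.rev)
      invFun := fun z => (z.1 + z.2.succ, z.2.rev)
      left_inv := fun z => σinv z
      right_inv := fun z => σinv z }
  have h := Fintype.sum_equiv e (fun z => f (z.1 + z.2.succ) z.2.rev) (fun z => f z.1 z.2)
    (fun z => rfl)
  calc ∑ i : Fin (n+1+1), ∑ k : Fin (n+1), f i k
      = ∑ z : Fin (n+1+1) × Fin (n+1), f z.1 z.2 :=
        (Fintype.sum_prod_type (fun z : Fin (n+1+1) × Fin (n+1) => f z.1 z.2)).symm
    _ = ∑ z : Fin (n+1+1) × Fin (n+1), f (z.1 + z.2.succ) z.2.rev := h.symm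
    _ = ∑ i : Fin (n+1+1), ∑ k : Fin (n+1), f (i + k.succ) k.rev :=
        Fintype.sum_prod_type (fun z : Fin (n+1+1) × Fin (n+1) => f (z.1 + z.2.succ) z.2.rev)
end Fin
section Words
variable {ι : Type*}

lemma mod_finish {n a b : ℕ} (hb : b < n) (h : a = b ∨ a = b + n ∨ a = b + 2*n) : a % n = b := by
  rcases h with rfl | rfl | rfl
  · exact Nat.mod_eq_of_lt hb
  · rw [Nat.add_mod_right]; exact Nat.mod_eq_of_lt hb
  · rw [two_mul, ← add_assoc, Nat.add_mod_right, Nat.add_mod_right]; exact Nat.mod_eq_of_lt hb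

lemma mod_shift' (n a b : ℕ) (h : a = b ∨ a = b + n ∨ b = a + n ∨ a = b + 2*n) : a % n = b % n := by
  rcases h with rfl | rfl | rfl | rfl
  · rfl
  · rw [Nat.add_mod_right]
  · rw [Nat.add_mod_right]
  · rw [two_mul, ← add_assoc, Nat.add_mod_right, Nat.add_mod_right]

lemma append_eval_left' {α : Type*} {p q : ℕ} (a : Fin p → α) (c : Fin q → α) (z : Fin (p+q))
    {v : ℕ} (hv : (z : ℕ) = v) (h : v < p) : Fin.append a c z = a ⟨v, h⟩ :=
  (congrArg (Fin.append a c) (Fin.ext hv : z = Fin.castAdd q ⟨v, h⟩)).trans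
    (Fin.append_left a c _)

lemma append_eval_right' {α : Type*} {p q : ℕ} (a : Fin p → α) (c : Fin q → α) (z : Fin (p+q))
    {v : ℕ} (hv : (z : ℕ) = p + v) (h : v < q) : Fin.append a c z = c ⟨v, h⟩ :=
  (congrArg (Fin.append a c) (Fin.ext hv : z = Fin.natAdd p ⟨v, h⟩)).trans
    (Fin.append_right a c _)

/-- Key word identity, `α`-side. -/
lemma word_A {l m : ℕ} (w : Fin (l+1+1) → ι) (u : Fin (m+1+1) → ι)
    (i : Fin (l+1+1)) (k₁ : Fin (l+1)) (j : Fin (m+1+1)) (t : Fin (l+m+1))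
    (h₀ : l+m+1 = (l+1)+m) (h₁ : l+m+1 = l+(m+1)) :
    Fin.append (dw (dw w (i + k₁.succ)) k₁.rev) (dw u j) (Fin.cast h₁ t) =
    dw (Fin.append (dw w i) (dw u j) : Fin ((l+1)+(m+1)) → ι) (Fin.castAdd (m+1) k₁)
      (Fin.cast h₀ ⟨((t : ℕ) + (l + m + 1 - (k₁ : ℕ))) % (l+m+1),
        Nat.mod_lt _ (by omega)⟩) := by
  have hk : (k₁ : ℕ) ≤ l := by omega
  have ht : (t : ℕ) < l + m + 1 := t.isLt
  have hi : (i : ℕ) < l + 1 + 1 := i.isLt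
  simp only [dw]
  rcases Nat.lt_or_ge (t : ℕ) (k₁ : ℕ) with h2 | h2
  · -- t < k₁ ≤ l
    have hin : ((t : ℕ) + (l + m + 1 - (k₁ : ℕ))) % (l+m+1)
        = (t : ℕ) + (l + m + 1 - (k₁ : ℕ)) := Nat.mod_eq_of_lt (by omega)
    rw [append_eval_left' (v := (t : ℕ)) _ _ (Fin.cast h₁ t) (Fin.coe_cast h₁ t) (by omega),
        append_eval_left' (v := (t : ℕ)) _ _ _
          (by simp only [Fin.val_add, Fin.val_succ, Fin.coe_castAdd, Fin.coe_cast, hin,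
                Nat.mod_add_mod]
              exact mod_finish (by omega) (by omega)) (by omega)]
    refine congrArg w (Fin.ext ?_)
    simp only [Fin.val_add, Fin.val_succ, Fin.val_rev, Nat.mod_add_mod]
    rw [Nat.mod_eq_of_lt (show l + 1 - ((k₁:ℕ)+1) + ((t:ℕ)+1) < l + 1 by omega)]
    apply mod_shift'
    omega
  rcases Nat.lt_or_ge (t : ℕ) l with h3 | h3
  · -- k₁ ≤ t < l
    rw [append_eval_left' (v := (t : ℕ)) _ _ (Fin.cast h₁ t) (Fin.coe_cast h₁ t) (by omega),
        append_eval_left' (v := (t : ℕ) + 1) _ _ _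
          (by simp only [Fin.val_add, Fin.val_succ, Fin.coe_castAdd, Fin.coe_cast,
                Nat.mod_add_mod]
              rw [show ((t : ℕ) + (l + m + 1 - (k₁ : ℕ))) % (l+m+1) = (t : ℕ) - (k₁ : ℕ) by
                rw [Nat.mod_eq_sub_mod (by omega), Nat.mod_eq_of_lt (by omega)]; omega]
              exact mod_finish (by omega) (by omega)) (by omega)]
    refine congrArg w (Fin.ext ?_)
    simp only [Fin.val_add, Fin.val_succ, Fin.val_rev, Nat.mod_add_mod]
    rw [show (l + 1 - ((k₁:ℕ)+1) + ((t:ℕ)+1)) % (l + 1) = (t:ℕ) - (k₁:ℕ) by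
      rw [Nat.mod_eq_sub_mod (by omega), Nat.mod_eq_of_lt (by omega)]; omega]
    apply mod_shift'
    omega
  · -- l ≤ t
    rw [append_eval_right' (v := (t : ℕ) - l) _ _ (Fin.cast h₁ t)
          (by simp only [Fin.coe_cast]; omega) (by omega),
        append_eval_right' (v := (t : ℕ) - l) _ _ _
          (by simp only [Fin.val_add, Fin.val_succ, Fin.coe_castAdd, Fin.coe_cast,
                Nat.mod_add_mod]
              rw [show ((t : ℕ) + (l + m + 1 - (k₁ : ℕ))) % (l+m+1) = (t : ℕ) - (k₁ : ℕ) by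
                rw [Nat.mod_eq_sub_mod (by omega), Nat.mod_eq_of_lt (by omega)]; omega]
              exact mod_finish (by omega) (by omega)) (by omega)]
end Words
section Words2
variable {ι : Type*}

/-- Key word identity, `β`-side. -/
lemma word_B {l m : ℕ} (w : Fin (l+1+1) → ι) (u : Fin (m+1+1) → ι)
    (i : Fin (l+1+1)) (j : Fin (m+1+1)) (k₂ : Fin (m+1)) (t : Fin (l+m+1))
    (h₀ : l+m+1 = (l+1)+m) :
    Fin.append (dw w i) (dw (dw u (j + k₂.succ)) k₂.rev) (Fin.cast h₀ t) =
    dw (Fin.append (dw w i) (dw u j) : Fin ((l+1)+(m+1)) → ι) (Fin.natAdd (l+1) k₂)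
      (Fin.cast h₀ ⟨((t : ℕ) + (m - (k₂ : ℕ))) % (l+m+1),
        Nat.mod_lt _ (by omega)⟩) := by
  have hk : (k₂ : ℕ) ≤ m := by omega
  have ht : (t : ℕ) < l + m + 1 := t.isLt
  have hj : (j : ℕ) < m + 1 + 1 := j.isLt
  simp only [dw]
  rcases Nat.lt_or_ge (t : ℕ) (l+1) with h2 | h2
  · -- t < l+1 : first block on both sides
    have hin : ((t : ℕ) + (m - (k₂ : ℕ))) % (l+m+1)
        = (t : ℕ) + (m - (k₂ : ℕ)) := Nat.mod_eq_of_lt (by omega)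
    rw [append_eval_left' (v := (t : ℕ)) _ _ (Fin.cast h₀ t) (Fin.coe_cast h₀ t) (by omega),
        append_eval_left' (v := (t : ℕ)) _ _ _
          (by simp only [Fin.val_add, Fin.val_succ, Fin.coe_natAdd, Fin.coe_cast, hin,
                Nat.mod_add_mod]
              exact mod_finish (by omega) (by omega)) (by omega)]
  rcases Nat.lt_or_ge (t : ℕ) (l+1+(k₂ : ℕ)) with h3 | h3
  · -- l+1 ≤ t < l+1+k₂
    have hin : ((t : ℕ) + (m - (k₂ : ℕ))) % (l+m+1)
        = (t : ℕ) + (m - (k₂ : ℕ)) := Nat.mod_eq_of_lt (by omega)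
    rw [append_eval_right' (v := (t : ℕ) - (l+1)) _ _ (Fin.cast h₀ t)
          (by simp only [Fin.coe_cast]; omega) (by omega),
        append_eval_right' (v := (t : ℕ) - (l+1)) _ _ _
          (by simp only [Fin.val_add, Fin.val_succ, Fin.coe_natAdd, Fin.coe_cast, hin,
                Nat.mod_add_mod]
              exact mod_finish (by omega) (by omega)) (by omega)]
    refine congrArg u (Fin.ext ?_)
    simp only [Fin.val_add, Fin.val_succ, Fin.val_rev, Nat.mod_add_mod]
    rw [Nat.mod_eq_of_lt
      (show m + 1 - ((k₂:ℕ)+1) + ((t:ℕ) - (l+1) + 1) < m + 1 by omega)]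
    apply mod_shift'
    omega
  · -- l+1+k₂ ≤ t
    have hin : ((t : ℕ) + (m - (k₂ : ℕ))) % (l+m+1) = (t : ℕ) - (l+1) - (k₂ : ℕ) := by
      rw [Nat.mod_eq_sub_mod (by omega), Nat.mod_eq_of_lt (by omega)]
      omega
    rw [append_eval_right' (v := (t : ℕ) - (l+1)) _ _ (Fin.cast h₀ t)
          (by simp only [Fin.coe_cast]; omega) (by omega),
        append_eval_right' (v := (t : ℕ) - l) _ _ _
          (by simp only [Fin.val_add, Fin.val_succ, Fin.coe_natAdd, Fin.coe_cast, hin,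
                Nat.mod_add_mod]
              exact mod_finish (by omega) (by omega)) (by omega)]
    refine congrArg u (Fin.ext ?_)
    simp only [Fin.val_add, Fin.val_succ, Fin.val_rev, Nat.mod_add_mod]
    rw [show (m + 1 - ((k₂:ℕ)+1) + ((t:ℕ) - (l+1) + 1)) % (m + 1)
        = (t:ℕ) - (l+1) - (k₂:ℕ) by
      rw [Nat.mod_eq_sub_mod (by omega), Nat.mod_eq_of_lt (by omega)]; omega]
    apply mod_shift'
    omega
end Words2
section Key
variable {K : Type*} [Field K] {V : Type*} [AddCommGroup V] [Module K V]

lemma ite_sum_zero {M γ : Type*} [AddCommMonoid M] {P : Prop} [Decidable P]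
    (s : Finset γ) (f : γ → M) :
    (if P then ∑ t ∈ s, f t else 0) = ∑ t ∈ s, (if P then f t else 0) := by
  split <;> simp

lemma smul_ite_zero' {M : Type*} [AddCommMonoid M] [Module K M] (c : K) {P : Prop}
    [Decidable P] (X : M) : c • (if P then X else 0) = if P then c • X else 0 := by
  split <;> simp

lemma sum_split {M : Type*} [AddCommMonoid M] {n1 n2 a bN : ℕ}
    (f : Fin n1 → Fin n2 → Fin (a+bN) → M) :
    (∑ i, ∑ j, ∑ q, f i j q) =
    ((∑ i, ∑ j, ∑ q : Fin a, f i j (Fin.castAdd bN q)) +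
      ∑ i, ∑ j, ∑ q : Fin bN, f i j (Fin.natAdd a q)) := by
  rw [← Finset.sum_add_distrib]
  refine Finset.sum_congr rfl fun i _ => ?_
  rw [← Finset.sum_add_distrib]
  exact Finset.sum_congr rfl fun j _ => Fin.sum_univ_add _

lemma sum_swap_inner {M : Type*} [AddCommMonoid M] {n1 : ℕ} {β γ : Type*}
    [Fintype β] [Fintype γ] (f : Fin n1 → β → γ → M) :
    (∑ i, ∑ j, ∑ k, f i j k) = ∑ i, ∑ k, ∑ j, f i j k :=
  Finset.sum_congr rfl fun _ _ => Finset.sum_comm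

lemma sum_change_inner {M : Type*} [AddCommMonoid M] {n1 n : ℕ}
    (f : Fin n1 → Fin (n+1+1) → Fin (n+1) → M) :
    (∑ i : Fin n1, ∑ a : Fin (n+1+1), ∑ c : Fin (n+1), f i a c) =
      ∑ i : Fin n1, ∑ a : Fin (n+1+1), ∑ c : Fin (n+1), f i (a + c.succ) c.rev :=
  Finset.sum_congr rfl fun i _ => sum_change _

set_option maxHeartbeats 2000000 in
lemma key {ι : Type*} [DecidableEq ι] (B : V →ₗ[K] V →ₗ[K] K) (b : Module.Basis ι K V)
    (Br : LB K V →ₗ[K] LB K V →ₗ[K] LB K V) (hBr : IsBracket K V B b Br)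
    (x : ι) (Dx : LB K V →ₗ[K] LB K V) (hDx : IsDx K V b x Dx)
    (l m : ℕ) (w : Fin (l+1+1) → ι) (u : Fin (m+1+1) → ι) :
    Dx (Br (ofB K V (l+1+1) (cls K V (mono K V fun k => b (w k))))
           (ofB K V (m+1+1) (cls K V (mono K V fun k => b (u k))))) =
    Br (Dx (ofB K V (l+1+1) (cls K V (mono K V fun k => b (w k)))))
       (ofB K V (m+1+1) (cls K V (mono K V fun k => b (u k)))) +
    Br (ofB K V (l+1+1) (cls K V (mono K V fun k => b (w k))))
       (Dx (ofB K V (m+1+1) (cls K V (mono K V fun k => b (u k))))) := by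
  have h₀ : l+m+1 = (l+1)+m := by omega
  have h₁ : l+m+1 = l+(m+1) := by omega
  have hD : ∀ (c : Fin ((l+1)+(m+1)) → ι),
      Dx (ofB K V ((l+1)+(m+1)) (cls K V (mono K V fun k => b (c k)))) =
      ∑ q : Fin ((l+1)+(m+1)), (if c q = x then (1:K) else 0) •
        ofB K V ((l+1)+m) (cls K V (mono K V fun k => b (dw c q k))) := by
    intro c
    have h : Dx (ofB K V ((l+1)+(m+1)) (cls K V (mono K V fun k => b (c k)))) =
        ofB K V ((l+1)+m) (∑ q : Fin ((l+1)+(m+1)), (if c q = x then (1:K) else 0) •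
          cls K V (mono K V fun k => b (dw c q k))) := hDx ((l+1)+m) c
    rw [h, map_sum]
    exact Finset.sum_congr rfl fun q _ => map_smul _ _ _
  have hB1 : ∀ (k' : Fin (l+1+1)),
      Br (ofB K V (l+1) (cls K V (mono K V fun k => b (dw w k' k))))
         (ofB K V (m+1+1) (cls K V (mono K V fun k => b (u k)))) =
      ∑ i' : Fin (l+1), ∑ j : Fin (m+1+1), B (b (dw w k' i')) (b (u j)) •
        ofB K V (l+(m+1)) (cls K V (mono K V fun k : Fin (l+(m+1)) =>
          b (Fin.append (dw (dw w k') i') (dw u j) k))) := by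
    intro k'
    rw [hBr l (m+1) (dw w k') u, map_sum]
    simp only [map_sum, map_smul]
  have hB2 : ∀ (k'' : Fin (m+1+1)),
      Br (ofB K V (l+1+1) (cls K V (mono K V fun k => b (w k))))
         (ofB K V (m+1) (cls K V (mono K V fun k => b (dw u k'' k)))) =
      ∑ i : Fin (l+1+1), ∑ j' : Fin (m+1), B (b (w i)) (b (dw u k'' j')) •
        ofB K V ((l+1)+m) (cls K V (mono K V fun k : Fin ((l+1)+m) =>
          b (Fin.append (dw w i) (dw (dw u k'') j') k))) := by
    intro k''
    rw [hBr (l+1) m w (dw u k''), map_sum]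
    simp only [map_sum, map_smul]
  rw [hBr (l+1) (m+1) w u, hDx (l+1) w, hDx (m+1) u]
  simp only [map_sum, map_smul, LinearMap.sum_apply, LinearMap.smul_apply]
  simp only [hD, hB1, hB2]
  simp only [Finset.smul_sum, ite_smul, one_smul, zero_smul,
    smul_ite_zero' (K := K) (M := LB K V), ite_sum_zero]
  simp only [ofB_reindex (K := K) (V := V) h₀, ofB_reindex (K := K) (V := V) h₁]
  rw [sum_split]
  congr 1
  · -- alpha side
    conv_lhs => rw [sum_swap_inner]
    conv_rhs => rw [sum_change]
    refine Finset.sum_congr rfl fun i _ => Finset.sum_congr rfl fun k₁ _ =>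
      Finset.sum_congr rfl fun j _ => ?_
    have hcls : cls K V (mono K V fun t : Fin (l+m+1) =>
          b (Fin.append (dw (dw w (i + k₁.succ)) k₁.rev) (dw u j) (Fin.cast h₁ t))) =
        cls K V (mono K V fun t : Fin (l+m+1) =>
          b (dw (Fin.append (dw w i) (dw u j) : Fin ((l+1)+(m+1)) → ι)
              (Fin.castAdd (m+1) k₁) (Fin.cast h₀ t))) := by
      have hw : (fun t : Fin (l+m+1) =>
            b (Fin.append (dw (dw w (i + k₁.succ)) k₁.rev) (dw u j) (Fin.cast h₁ t))) =
          (fun t : Fin (l+m+1) => (fun s : Fin (l+m+1) =>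
              b (dw (Fin.append (dw w i) (dw u j) : Fin ((l+1)+(m+1)) → ι)
                  (Fin.castAdd (m+1) k₁) (Fin.cast h₀ s)))
            ⟨((t : ℕ) + (l+m+1 - (k₁ : ℕ))) % (l+m+1), Nat.mod_lt _ t.pos⟩) :=
        funext fun t => congrArg b (word_A w u i k₁ j t h₀ h₁)
      exact (congrArg (cls K V) (congrArg (mono K V) hw)).trans
        (cls_rot_nat (K := K) (V := V)
          (fun s : Fin (l+m+1) => b (dw (Fin.append (dw w i) (dw u j) : Fin ((l+1)+(m+1)) → ι)
            (Fin.castAdd (m+1) k₁) (Fin.cast h₀ s))) (l+m+1 - (k₁ : ℕ)))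
    rw [show Fin.append (dw w i) (dw u j) (Fin.castAdd (m+1) k₁) = w (i + k₁.succ) from
          Fin.append_left _ _ _,
        show dw w (i + k₁.succ) k₁.rev = w i from congrArg w (add_succ_rev_succ i k₁),
        hcls]
  · -- beta side
    conv_rhs => rw [Finset.sum_comm]
    conv_rhs => rw [sum_change_inner]
    refine Finset.sum_congr rfl fun i _ => Finset.sum_congr rfl fun j _ =>
      Finset.sum_congr rfl fun k₂ _ => ?_
    have hcls : cls K V (mono K V fun t : Fin (l+m+1) =>
          b (Fin.append (dw w i) (dw (dw u (j + k₂.succ)) k₂.rev) (Fin.cast h₀ t))) =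
        cls K V (mono K V fun t : Fin (l+m+1) =>
          b (dw (Fin.append (dw w i) (dw u j) : Fin ((l+1)+(m+1)) → ι)
              (Fin.natAdd (l+1) k₂) (Fin.cast h₀ t))) := by
      have hw : (fun t : Fin (l+m+1) =>
            b (Fin.append (dw w i) (dw (dw u (j + k₂.succ)) k₂.rev) (Fin.cast h₀ t))) =
          (fun t : Fin (l+m+1) => (fun s : Fin (l+m+1) =>
              b (dw (Fin.append (dw w i) (dw u j) : Fin ((l+1)+(m+1)) → ι)
                  (Fin.natAdd (l+1) k₂) (Fin.cast h₀ s)))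
            ⟨((t : ℕ) + (m - (k₂ : ℕ))) % (l+m+1), Nat.mod_lt _ t.pos⟩) :=
        funext fun t => congrArg b (word_B w u i j k₂ t h₀)
      exact (congrArg (cls K V) (congrArg (mono K V) hw)).trans
        (cls_rot_nat (K := K) (V := V)
          (fun s : Fin (l+m+1) => b (dw (Fin.append (dw w i) (dw u j) : Fin ((l+1)+(m+1)) → ι)
            (Fin.natAdd (l+1) k₂) (Fin.cast h₀ s))) (m - (k₂ : ℕ)))
    rw [show Fin.append (dw w i) (dw u j) (Fin.natAdd (l+1) k₂) = u (j + k₂.succ) from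
          Fin.append_right _ _ _,
        show dw u (j + k₂.succ) k₂.rev = u j from congrArg u (add_succ_rev_succ j k₂),
        hcls]
end Key
section Span
variable {K : Type*} [Field K] {V : Type*} [AddCommGroup V] [Module K V]

lemma tprod_mem_span {ι : Type*} (b : Module.Basis ι K V) (n : ℕ) (v : Fin n → V) :
    mono K V v ∈ Submodule.span K
      (Set.range fun w : Fin n → ι => mono K V fun k => b (w k)) := by
  classical
  have hv : (fun i : Fin n => v i) =
      fun i : Fin n => ∑ a ∈ (b.repr (v i)).support, (b.repr (v i)) a • b a := by
    funext i
    conv_lhs => rw [← b.linearCombination_repr (v i)]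
    rw [Finsupp.linearCombination_apply, Finsupp.sum]
  have h1 : mono K V v = ∑ r ∈ Fintype.piFinset (fun i => (b.repr (v i)).support),
      (∏ i, (b.repr (v i)) (r i)) • mono K V fun i => b (r i) := by
    rw [mono, show (PiTensorProduct.tprod K) v = (PiTensorProduct.tprod K)
      (fun i : Fin n => ∑ a ∈ (b.repr (v i)).support, (b.repr (v i)) a • b a) from
        congrArg _ hv]
    rw [MultilinearMap.map_sum_finset]
    exact Finset.sum_congr rfl fun r _ => MultilinearMap.map_smul_univ _ _ _
  rw [h1]
  exact Submodule.sum_mem _ fun r _ => Submodule.smul_mem _ _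
    (Submodule.subset_span ⟨fun i => r i, rfl⟩)

lemma gen_span {ι : Type*} (b : Module.Basis ι K V) :
    LVsub K V ≤ Submodule.span K {z : LB K V | ∃ (l : ℕ) (v : Fin (l+1+1) → ι),
      z = ofB K V (l+1+1) (cls K V (mono K V fun k => b (v k)))} := by
  refine iSup_le fun l => ?_
  rintro z ⟨q, rfl⟩
  obtain ⟨t, rfl⟩ := Submodule.Quotient.mk_surjective _ q
  let L : TP K V (l+2) →ₗ[K] LB K V :=
    (ofB K V (l+2)).comp (cycRel K V (l+2)).mkQ
  have htop : t ∈ Submodule.span K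
      (Set.range fun w : Fin (l+2) → ι => mono K V fun k => b (w k)) := by
    have h := PiTensorProduct.span_tprod_eq_top (R := K) (s := fun _ : Fin (l+2) => V)
    have h2 : (⊤ : Submodule K (TP K V (l+2))) ≤ Submodule.span K
        (Set.range fun w : Fin (l+2) → ι => mono K V fun k => b (w k)) := by
      rw [← h, Submodule.span_le]
      rintro _ ⟨v, rfl⟩
      exact tprod_mem_span b (l+2) v
    exact h2 trivial
  have himg := Submodule.apply_mem_span_image_of_mem_span L htop
  refine Submodule.span_mono ?_ himg
  rintro _ ⟨_, ⟨w, rfl⟩, rfl⟩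
  exact ⟨l, w, rfl⟩
end Span
/-- For each basis element `x`, the endomorphism `D_x`,
defined on a monomial `α = α₁ ⊗ ⋯ ⊗ α_l` by
`D_x(α) = Σᵢ δ_{αᵢ, x} • class (D_{i,i}(α))` and extended linearly, is a
derivation of the Lie algebra `L(V)`:
`D_x([α, β]) = [D_x(α), β] + [α, D_x(β)]` for all `α, β ∈ L(V)`. -/
theorem Dx_isDerivation
    {ι : Type*} [DecidableEq ι] (B : V →ₗ[K] V →ₗ[K] K) (hB : ∀ v : V, B v v = 0)
    (b : Module.Basis ι K V)
    (Br : LB K V →ₗ[K] LB K V →ₗ[K] LB K V) (hBr : IsBracket K V B b Br)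
    (x : ι) (Dx : LB K V →ₗ[K] LB K V) (hDx : IsDx K V b x Dx) :
    ∀ α ∈ LVsub K V, ∀ β ∈ LVsub K V,
      Dx (Br α β) = Br (Dx α) β + Br α (Dx β) := by
  intro α hα β hβ
  have hα2 := gen_span (K := K) (V := V) b hα
  have hβ2 := gen_span (K := K) (V := V) b hβ
  refine Submodule.span_induction₂
    (p := fun a c _ _ => Dx (Br a c) = Br (Dx a) c + Br a (Dx c))
    ?_ ?_ ?_ ?_ ?_ ?_ ?_ hα2 hβ2
  · rintro _ _ ⟨l, w, rfl⟩ ⟨m, u, rfl⟩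
    exact key B b Br hBr x Dx hDx l m w u
  · intro y _
    simp
  · intro x1 _
    simp
  · intro x1 y1 z _ _ _ h1 h2
    simp only [map_add, LinearMap.add_apply, h1, h2]
    abel
  · intro x1 y1 z _ _ _ h1 h2
    simp only [map_add, LinearMap.add_apply, h1, h2]
    abel
  · intro r x1 y1 _ _ h1
    simp only [map_smul, LinearMap.smul_apply, h1, smul_add]
  · intro r x1 y1 _ _ h1
    simp only [map_smul, LinearMap.smul_apply, h1, smul_add]

end
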